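/- Let G = (V,E) be a directed mixed graph and suppose α and β are potential siblings in I(G). Let G⁺ be the DMG obtained from G by adding the bidirected edge α↔β. Then I(G⁺) = I(G). -/
import Mathlib


/-!
Directed mixed graphs (DMGs) with μ-separation, following
Mogensen & Hansen, "Markov equivalence of marginalized local independence graphs".
-/

universe u

/-- A directed mixed graph on node set `V`: a set of directed edges (`dir a b`
meaning `a → b`) and a set of bidirected edges (`bi`, a symmetric relation since
bidirected edges are unordered pairs).  Loops are allowed. -/
structure DMG (V : Type u) where
  dir : V → V → Prop
  bi : V → V → Prop
  bi_symm : ∀ a b, bi a b → bi b a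

namespace DMG

variable {V : Type u}

/-- A single step of a walk: an edge instance together with the direction in
which it is traversed (this records, in particular, orientations of loops).
A directed edge has a tail at its source and a head at its target; a bidirected
edge has heads at both endpoints. -/
inductive Step (G : DMG V) : V → V → Type u
  | dirF : ∀ {a b : V}, G.dir a b → Step G a b
  | dirB : ∀ {a b : V}, G.dir b a → Step G a b
  | bid  : ∀ {a b : V}, G.bi a b → Step G a b

/-- Whether the step has a head (edge mark) at its start node. -/
def Step.headStart {G : DMG V} : ∀ {a b : V}, Step G a b → Bool
  | _, _, .dirF _ => false
  | _, _, .dirB _ => true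
  | _, _, .bid _ => true

/-- Whether the step has a head (edge mark) at its end node. -/
def Step.headEnd {G : DMG V} : ∀ {a b : V}, Step G a b → Bool
  | _, _, .dirF _ => true
  | _, _, .dirB _ => false
  | _, _, .bid _ => true

/-- The step traverses a bidirected edge. -/
def Step.IsBid {G : DMG V} {a b : V} : Step G a b → Prop
  | .bid _ => True
  | _ => False

/-- The step traverses a directed edge, forwards. -/
def Step.IsDirF {G : DMG V} {a b : V} : Step G a b → Prop
  | .dirF _ => True
  | _ => False

/-- The underlying edge of a step: a directed edge is the ordered pair
(tail, head); a bidirected edge is the unordered pair of its endpoints. -/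
def Step.edge {G : DMG V} : ∀ {a b : V}, Step G a b → (V × V) ⊕ (Sym2 V)
  | a, b, .dirF _ => Sum.inl (a, b)
  | a, b, .dirB _ => Sum.inl (b, a)
  | a, b, .bid _ => Sum.inr s(a, b)

/-- A walk in a DMG: an alternating sequence of nodes and edges, each edge
between its neighbouring nodes, with a chosen orientation of each edge
(in particular of each directed loop). -/
inductive Walk (G : DMG V) : V → V → Type u
  | nil (a : V) : Walk G a a
  | cons {a b c : V} (s : Step G a b) (w : Walk G b c) : Walk G a c

namespace Walk

variable {G : DMG V}

/-- A nontrivial walk contains at least one edge. -/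
def Nontrivial : ∀ {a b : V}, Walk G a b → Prop
  | _, _, .nil _ => False
  | _, _, .cons _ _ => True

/-- The list of nodes of a walk, in order (with multiplicity). -/
def nodes : ∀ {a b : V}, Walk G a b → List V
  | a, _, .nil _ => [a]
  | a, _, .cons _ w => a :: w.nodes

/-- The non-endpoint (internal) nodes of a walk, in order (with multiplicity). -/
def interior {a b : V} (w : Walk G a b) : List V :=
  (w.nodes.dropLast).drop 1

/-- The list of edges of a walk. -/
def edges : ∀ {a b : V}, Walk G a b → List ((V × V) ⊕ (Sym2 V))
  | _, _, .nil _ => []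
  | _, _, .cons s w => s.edge :: w.edges

/-- Whether the first edge of the walk has a head at the first node
(`false` for a trivial walk). -/
def firstHead : ∀ {a b : V}, Walk G a b → Bool
  | _, _, .nil _ => false
  | _, _, .cons s _ => s.headStart

/-- Whether the last edge of the walk has a head at the last node
(`false` for a trivial walk). -/
def lastHead : ∀ {a b : V}, Walk G a b → Bool
  | _, _, .nil _ => false
  | _, _, .cons s (.nil _) => s.headEnd
  | _, _, .cons _ (.cons t w) => lastHead (Walk.cons t w)

/-- Helper: conditions at all remaining internal node instances of a walk,
where `h` records whether the edge arriving at the current start node has a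
head there.  A node instance is a collider if both adjoining edges have a
head at it; a collider must lie in `Anc`, a noncollider must avoid `C`. -/
def openFrom (C Anc : Set V) : ∀ {a b : V}, Bool → Walk G a b → Prop
  | _, _, _, .nil _ => True
  | a, _, h, .cons s w =>
      (if h && s.headStart then a ∈ Anc else a ∉ C) ∧ openFrom C Anc s.headEnd w

/-- Helper: every remaining internal node instance which is a collider lies in `S`. -/
def collInFrom (S : Set V) : ∀ {a b : V}, Bool → Walk G a b → Prop
  | _, _, _, .nil _ => True
  | a, _, h, .cons s w =>
      ((h && s.headStart) = true → a ∈ S) ∧ collInFrom S s.headEnd w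

/-- Every collider (internal node instance with heads on both sides) of the
walk lies in `S`. -/
def CollidersIn (S : Set V) : ∀ {a b : V}, Walk G a b → Prop
  | _, _, .nil _ => True
  | _, _, .cons s w => collInFrom S s.headEnd w

/-- The walk has no colliders. -/
def NoColliders {a b : V} (w : Walk G a b) : Prop :=
  w.CollidersIn ∅

/-- Helper: every remaining internal node instance is a collider. -/
def allCollFrom : ∀ {a b : V}, Bool → Walk G a b → Prop
  | _, _, _, .nil _ => True
  | _, _, h, .cons s w => (h && s.headStart) = true ∧ allCollFrom s.headEnd w

/-- Every internal node instance of the walk is a collider (no noncolliders). -/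
def AllColliders : ∀ {a b : V}, Walk G a b → Prop
  | _, _, .nil _ => True
  | _, _, .cons s w => allCollFrom s.headEnd w

/-- Every edge of the walk is bidirected. -/
def AllBid : ∀ {a b : V}, Walk G a b → Prop
  | _, _, .nil _ => True
  | _, _, .cons s w => s.IsBid ∧ w.AllBid

/-- The walk consists of a directed first edge (pointing forwards) followed by
bidirected edges only (the form `α → β` or `α → γ₁ ↔ ⋯ ↔ γₙ ↔ β`). -/
def UniForm : ∀ {a b : V}, Walk G a b → Prop
  | _, _, .nil _ => False
  | _, _, .cons s w => s.IsDirF ∧ w.AllBid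

end Walk

/-- `a` is an ancestor of `b`: there is a (possibly trivial) directed path
from `a` to `b`. -/
def anc (G : DMG V) (a b : V) : Prop := Relation.ReflTransGen G.dir a b

/-- The set of ancestors of nodes of `C`. -/
def anSet (G : DMG V) (C : Set V) : Set V := {a | ∃ c ∈ C, G.anc a c}

/-- The walk is μ-connecting given `C`: it is nontrivial, its first node is not
in `C`, every collider lies in `An(C)`, no noncollider lies in `C`, and its
final edge has a head at the final node. -/
def Walk.MuConn {G : DMG V} (C : Set V) : ∀ {a b : V}, Walk G a b → Prop
  | _, _, .nil _ => False
  | a, _, .cons s w =>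
      a ∉ C ∧ Walk.openFrom C (G.anSet C) s.headEnd w ∧ (Walk.cons s w).lastHead = true

/-- `B` is μ-separated from `A` given `C` in `G`: there is no μ-connecting
walk from any node of `A` to any node of `B` given `C`. -/
def muSep (G : DMG V) (A B C : Set V) : Prop :=
  ∀ ⦃a b : V⦄, a ∈ A → b ∈ B → ∀ w : Walk G a b, ¬ w.MuConn C

/-- Two DMGs on the same node set are Markov equivalent: they induce the same
independence model via μ-separation, i.e. `I(G₁) = I(G₂)`. -/
def MarkovEq (G₁ G₂ : DMG V) : Prop :=
  ∀ A B C : Set V, muSep G₁ A B C ↔ muSep G₂ A B C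

/-- `b` is separable from `a` in `I(G)`: there is `C ⊆ V ∖ {a}` with
`⟨{a},{b} | C⟩ ∈ I(G)`. -/
def separable (G : DMG V) (a b : V) : Prop :=
  ∃ C : Set V, a ∉ C ∧ muSep G {a} {b} C

/-- `a ∈ u(b, I(G))`: `b` is inseparable from `a` in `I(G)`. -/
def inU (G : DMG V) (a b : V) : Prop := ¬ G.separable a b

/-- `G₁` is a subgraph of `G₂` (same node set, edge-set inclusion). -/
def Sub (G₁ G₂ : DMG V) : Prop :=
  (∀ a b, G₁.dir a b → G₂.dir a b) ∧ (∀ a b, G₁.bi a b → G₂.bi a b)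

/-- The DMG obtained by adding the directed edge `a → b`. -/
def addDir (G : DMG V) (a b : V) : DMG V where
  dir x y := G.dir x y ∨ (x = a ∧ y = b)
  bi := G.bi
  bi_symm := G.bi_symm

/-- The DMG obtained by adding the bidirected edge `a ↔ b`. -/
def addBi (G : DMG V) (a b : V) : DMG V where
  dir := G.dir
  bi x y := G.bi x y ∨ (x = a ∧ y = b) ∨ (x = b ∧ y = a)
  bi_symm x y h := by
    rcases h with h | h | h
    · exact Or.inl (G.bi_symm _ _ h)
    · exact Or.inr (Or.inr ⟨h.2, h.1⟩)
    · exact Or.inr (Or.inl ⟨h.2, h.1⟩)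

/-- The DMG obtained by removing the directed edge `a → b`. -/
def removeDir (G : DMG V) (a b : V) : DMG V where
  dir x y := G.dir x y ∧ ¬(x = a ∧ y = b)
  bi := G.bi
  bi_symm := G.bi_symm

/-- The DMG obtained by removing the bidirected edge `a ↔ b`. -/
def removeBi (G : DMG V) (a b : V) : DMG V where
  dir := G.dir
  bi x y := G.bi x y ∧ ¬((x = a ∧ y = b) ∨ (x = b ∧ y = a))
  bi_symm x y h := ⟨G.bi_symm _ _ h.1, fun hc => h.2 (by tauto)⟩

/-- The complete DMG: all directed and all bidirected edges present. -/
def IsComplete (G : DMG V) : Prop :=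
  (∀ a b, G.dir a b) ∧ (∀ a b, G.bi a b)

/-- A DMG is maximal if it is complete, or adding any (absent) edge changes the
induced independence model. -/
def IsMaximal (G : DMG V) : Prop :=
  G.IsComplete ∨
    ∀ a b : V, (¬ G.dir a b → ¬ MarkovEq (G.addDir a b) G) ∧
      (¬ G.bi a b → ¬ MarkovEq (G.addBi a b) G)

end DMG
namespace DMG

variable {V : Type u}

/-- An inducing path from `a` to `b`: a nontrivial path or cycle from `a` to
`b` with a head at `b`, with no noncolliders, and on which every node is an
ancestor of `a` or of `b`. -/
def IsInducingPath (G : DMG V) {a b : V} (w : Walk G a b) : Prop :=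
  w.Nontrivial ∧
  (w.nodes.Nodup ∨ (a = b ∧ w.nodes.dropLast.Nodup)) ∧
  w.lastHead = true ∧
  w.AllColliders ∧
  ∀ x ∈ w.nodes, G.anc x a ∨ G.anc x b

/-- A bidirected inducing path: an inducing path all of whose edges are bidirected. -/
def IsBidirectedIP (G : DMG V) {a b : V} (w : Walk G a b) : Prop :=
  G.IsInducingPath w ∧ w.AllBid

/-- A directed inducing path: an inducing path of the form `α → β` or
`α → γ₁ ↔ ⋯ ↔ γₙ ↔ β` with every `γᵢ` an ancestor of `β`. -/
def IsDirectedIP (G : DMG V) {a b : V} (w : Walk G a b) : Prop :=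
  G.IsInducingPath w ∧ w.UniForm ∧ ∀ x ∈ w.interior, G.anc x b

/-- There exists a nontrivial walk in `G` between `x` and `y` with no
colliders, all non-endpoint nodes in `M`, and with edge marks `hs` at `x`
(`true` = head) and `he` at `y`. -/
def ConnThrough (G : DMG V) (M : Set V) (x y : V) (hs he : Bool) : Prop :=
  ∃ w : Walk G x y, w.Nontrivial ∧ w.NoColliders ∧
    (∀ z ∈ w.interior, z ∈ M) ∧ w.firstHead = hs ∧ w.lastHead = he

/-- The latent projection `m(G, O)` of `G` on `O`: the DMG on node set `O`
having an edge (with given endpoint marks) between `α` and `β` if and only if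
`G` contains a nontrivial endpoint-identical walk between `α` and `β` with no
colliders and all non-endpoint nodes in `M = V ∖ O`. -/
def latentProj (G : DMG V) (O : Set V) : DMG {x : V // x ∈ O} where
  dir x y := ConnThrough G Oᶜ x.1 y.1 false true
  bi x y := ConnThrough G Oᶜ x.1 y.1 true true ∨ ConnThrough G Oᶜ y.1 x.1 true true
  bi_symm x y h := h.symm

/-- `x` is directedly collider-connected to `b`: there is a nontrivial walk
from `x` to `b` with a head at `b` on which every non-endpoint node is a
collider. -/
def dirCollConn (G : DMG V) (x b : V) : Prop :=
  ∃ w : Walk G x b, w.Nontrivial ∧ w.AllColliders ∧ w.lastHead = true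

/-- The set `D(a,b)` of nodes in `An({a,b})` directedly collider-connected to
`b`, except `a`. -/
def Dset (G : DMG V) (a b : V) : Set V :=
  {x | x ∈ G.anSet {a, b} ∧ G.dirCollConn x b} \ {a}

/-- `a` and `b` are potential siblings in the independence model `I(G)`. -/
def PotSib (G : DMG V) (a b : V) : Prop :=
  (G.inU b a ∧ G.inU a b) ∧
  (∀ (γ : V) (C : Set V), b ∈ C → muSep G {γ} {a} C → muSep G {γ} {b} C) ∧
  (∀ (γ : V) (C : Set V), a ∈ C → muSep G {γ} {b} C → muSep G {γ} {a} C)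

/-- `a` is a potential parent of `b` in the independence model `I(G)`. -/
def PotPar (G : DMG V) (a b : V) : Prop :=
  G.inU a b ∧
  (∀ (γ : V) (C : Set V), a ∉ C → muSep G {γ} {b} C → muSep G {γ} {a} C) ∧
  (∀ (γ δ : V) (C : Set V), a ∉ C → b ∈ C →
    muSep G {γ} {δ} C → muSep G {γ} {b} C ∨ muSep G {a} {δ} C) ∧
  (∀ (γ : V) (C : Set V), a ∉ C → muSep G {b} {γ} C → muSep G {b} {γ} (C ∪ {a}))

/-- The graph `N(I(G))`: directed edge `a → b` present iff `a` is a potential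
parent of `b` in `I(G)`, bidirected edge `a ↔ b` present iff `a` and `b` are
potential siblings in `I(G)` (potential siblinghood is symmetric). -/
def NGraph (G : DMG V) : DMG V where
  dir a b := G.PotPar a b
  bi a b := G.PotSib a b ∨ G.PotSib b a
  bi_symm _ _ h := h.symm

/-- A path is m-connecting given `C` if it is a path (no repeated nodes), no
noncollider on it is in `C` and every collider on it is in `An(C)`. -/
def Walk.MConn {G : DMG V} (C : Set V) : ∀ {a b : V}, Walk G a b → Prop
  | _, _, .nil _ => True
  | _, _, .cons s w =>
      (Walk.cons s w).nodes.Nodup ∧ Walk.openFrom C (G.anSet C) s.headEnd w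

/-- `A` and `B` are m-separated by `C`: there is no m-connecting path between
a node of `A` and a node of `B` given `C`. -/
def mSep (G : DMG V) (A B C : Set V) : Prop :=
  ∀ ⦃a b : V⦄, a ∈ A → b ∈ B →
    (∀ w : Walk G a b, ¬ w.MConn C) ∧ (∀ w : Walk G b a, ¬ w.MConn C)

/-- Auxiliary directed-edge relation of the `B`-history version of `G`. -/
def histDir (G : DMG V) (B : Set V) : (V ⊕ {x : V // x ∈ B}) → (V ⊕ {x : V // x ∈ B}) → Prop
  | .inl u, .inl v => G.dir u v
  | .inl u, .inr v => G.dir u v.1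
  | _, _ => False

/-- Auxiliary bidirected-edge relation of the `B`-history version of `G`. -/
def histBi (G : DMG V) (B : Set V) : (V ⊕ {x : V // x ∈ B}) → (V ⊕ {x : V // x ∈ B}) → Prop
  | .inl u, .inl v => G.bi u v
  | .inl u, .inr v => G.bi u v.1
  | .inr u, .inl v => G.bi u.1 v
  | .inr _, .inr _ => False

/-- The `B`-history version `G(B)` of `G`: node set `V ⊔ Bᵖ`, whose subgraph
on `V` is `G`, with additionally `α ↔ βᵖ` whenever `α ↔ β` in `G` and
`α → βᵖ` whenever `α → β` in `G` (for `α ∈ V`, `β ∈ B`). -/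
def hist (G : DMG V) (B : Set V) : DMG (V ⊕ {x : V // x ∈ B}) where
  dir := G.histDir B
  bi := G.histBi B
  bi_symm x y h := by
    cases x <;> cases y <;>
      simp only [histBi] at h ⊢ <;>
      first
        | exact G.bi_symm _ _ h
        | exact h

end DMG

/-! ### Auxiliary machinery for Statement 13 -/

namespace DMG

variable {V : Type u}

namespace Walk

variable {G : DMG V}

/-- Concatenation of walks. -/
def append : ∀ {x y z : V}, Walk G x y → Walk G y z → Walk G x z
  | _, _, _, .nil _, w => w
  | _, _, _, .cons s u, w => .cons s (u.append w)

/-- `myLast h w` is `lastHead w` if `w` is nontrivial, and `h` otherwise. -/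
def myLast : ∀ {x y : V}, Bool → Walk G x y → Bool
  | _, _, h, .nil _ => h
  | _, _, _, .cons s w => myLast s.headEnd w

theorem lastHead_cons : ∀ {x y z : V} (s : Step G x y) (w : Walk G y z),
    (Walk.cons s w).lastHead = myLast s.headEnd w
  | _, _, _, _, .nil _ => rfl
  | _, _, _, _, .cons t u => lastHead_cons t u

theorem myLast_append : ∀ {x y z : V} (h : Bool) (u : Walk G x y) (w : Walk G y z),
    myLast h (u.append w) = myLast (myLast h u) w
  | _, _, _, _, .nil _, _ => rfl
  | _, _, _, _, .cons s u, w => myLast_append s.headEnd u w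

theorem openFrom_append {C Anc : Set V} : ∀ {x y z : V} (h : Bool) (u : Walk G x y)
    (w : Walk G y z), openFrom C Anc h u → openFrom C Anc (myLast h u) w →
    openFrom C Anc h (u.append w)
  | _, _, _, _, .nil _, _, _, hw => hw
  | _, _, _, _, .cons s u, w, hu, hw => ⟨hu.1, openFrom_append s.headEnd u w hu.2 hw⟩

end Walk

/-- `ρ` is a "good" walk: nontrivial, starts outside `C`, all internal node
instances are open, and its last edge mark at its endpoint is `hb`. -/
def GoodTo (G : DMG V) (C : Set V) : ∀ {x y : V}, Walk G x y → Bool → Prop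
  | _, _, .nil _, _ => False
  | x, _, .cons s w, hb =>
      x ∉ C ∧ Walk.openFrom C (G.anSet C) s.headEnd w ∧ Walk.myLast s.headEnd w = hb

theorem goodTo_of_muConn {G : DMG V} {C : Set V} {x y : V} {w : Walk G x y}
    (h : w.MuConn C) : GoodTo G C w true := by
  cases w with
  | nil => exact h.elim
  | cons s u =>
    refine ⟨h.1, h.2.1, ?_⟩
    have := h.2.2
    rwa [Walk.lastHead_cons] at this

theorem muConn_of_goodTo {G : DMG V} {C : Set V} {x y : V} {w : Walk G x y}
    (h : GoodTo G C w true) : w.MuConn C := by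
  cases w with
  | nil => exact h.elim
  | cons s u =>
    refine ⟨h.1, h.2.1, ?_⟩
    rw [Walk.lastHead_cons]
    exact h.2.2

theorem goodTo_append {G : DMG V} {C : Set V} {γ y z : V} {hy hz : Bool}
    (ρ : Walk G γ y) (hρ : GoodTo G C ρ hy) (ν : Walk G y z)
    (hν : Walk.openFrom C (G.anSet C) hy ν) (hl : Walk.myLast hy ν = hz) :
    GoodTo G C (ρ.append ν) hz := by
  cases ρ with
  | nil => exact hρ.elim
  | cons s w =>
    obtain ⟨h1, h2, h3⟩ := hρ
    refine ⟨h1, ?_, ?_⟩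
    · exact Walk.openFrom_append _ _ _ h2 (by rwa [h3])
    · rw [Walk.myLast_append, h3, hl]

theorem exists_of_not_muSep {G : DMG V} {x y : V} {C : Set V}
    (h : ¬ G.muSep {x} {y} C) : ∃ w : Walk G x y, w.MuConn C := by
  by_contra hc
  push_neg at hc
  refine h fun a b ha hb w hw => ?_
  rw [Set.mem_singleton_iff] at ha hb
  subst ha; subst hb
  exact hc w hw

/-- Embedding of steps along a subgraph inclusion. -/
def Step.map {G₁ G₂ : DMG V} (hs : Sub G₁ G₂) : ∀ {x y : V}, Step G₁ x y → Step G₂ x y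
  | _, _, .dirF h => .dirF (hs.1 _ _ h)
  | _, _, .dirB h => .dirB (hs.1 _ _ h)
  | _, _, .bid h => .bid (hs.2 _ _ h)

theorem Step.headStart_map {G₁ G₂ : DMG V} (hs : Sub G₁ G₂) {x y : V} (s : Step G₁ x y) :
    (s.map hs).headStart = s.headStart := by cases s <;> rfl

theorem Step.headEnd_map {G₁ G₂ : DMG V} (hs : Sub G₁ G₂) {x y : V} (s : Step G₁ x y) :
    (s.map hs).headEnd = s.headEnd := by cases s <;> rfl

/-- Embedding of walks along a subgraph inclusion. -/
def Walk.map {G₁ G₂ : DMG V} (hs : Sub G₁ G₂) : ∀ {x y : V}, Walk G₁ x y → Walk G₂ x y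
  | _, _, .nil x => .nil x
  | _, _, .cons s w => .cons (s.map hs) (w.map hs)

theorem Walk.openFrom_map {G₁ G₂ : DMG V} (hs : Sub G₁ G₂) {C Anc : Set V} :
    ∀ {x y : V} (h : Bool) (w : Walk G₁ x y),
      Walk.openFrom C Anc h w → Walk.openFrom C Anc h (w.map hs)
  | _, _, _, .nil _, _ => trivial
  | _, _, h, .cons s w, hw => by
      refine ⟨?_, ?_⟩
      · rw [Step.headStart_map]; exact hw.1
      · rw [Step.headEnd_map]; exact openFrom_map hs _ w hw.2

theorem Walk.myLast_map {G₁ G₂ : DMG V} (hs : Sub G₁ G₂) :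
    ∀ {x y : V} (h : Bool) (w : Walk G₁ x y), Walk.myLast h (w.map hs) = Walk.myLast h w
  | _, _, _, .nil _ => rfl
  | _, _, h, .cons s w => by
      show Walk.myLast (s.map hs).headEnd (w.map hs) = _
      rw [Step.headEnd_map, myLast_map hs s.headEnd w]
      rfl

/-- `G` is a subgraph of `G.addBi a b`. -/
def subAddBi (G : DMG V) (a b : V) : Sub G (G.addBi a b) :=
  ⟨fun _ _ hd => hd, fun _ _ hb => Or.inl hb⟩

theorem anSet_addBi (G : DMG V) (a b : V) (C : Set V) :
    (G.addBi a b).anSet C = G.anSet C := rfl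

theorem muConn_map_addBi {G : DMG V} {a b : V} {C : Set V} {x y : V} {w : Walk G x y}
    (hw : w.MuConn C) : (w.map (subAddBi G a b)).MuConn C := by
  cases w with
  | nil => exact hw.elim
  | cons s u =>
    refine ⟨hw.1, ?_, ?_⟩
    · have h2 := Walk.openFrom_map (subAddBi G a b) (C := C) (Anc := G.anSet C)
        s.headEnd u hw.2.1
      show Walk.openFrom C ((G.addBi a b).anSet C) (Step.headEnd _) (u.map _)
      rw [anSet_addBi, Step.headEnd_map]
      exact h2
    · show (Walk.cons (s.map _) (u.map _)).lastHead = true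
      rw [Walk.lastHead_cons, Step.headEnd_map, Walk.myLast_map, ← Walk.lastHead_cons]
      exact hw.2.2

/-- The key replacement lemma: any μ-connecting suffix in `G⁺` following a good
`G`-prefix can be turned into a μ-connecting walk in `G`. -/
theorem main_lemma (G : DMG V) (a b : V) (h : G.PotSib a b) (C : Set V) (γ : V) :
    ∀ {y δ : V} (σ : Walk (G.addBi a b) y δ) (hy : Bool) (ρ : Walk G γ y),
      GoodTo G C ρ hy → Walk.openFrom C (G.anSet C) hy σ →
      Walk.myLast hy σ = true → ∃ w : Walk G γ δ, w.MuConn C := by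
  intro y δ σ
  induction σ with
  | nil =>
    intro hy ρ hρ _ hl
    simp only [Walk.myLast] at hl
    subst hl
    exact ⟨ρ, muConn_of_goodTo hρ⟩
  | @cons y m δ' s σ' ih =>
    intro hy ρ hρ hopen hlast
    obtain ⟨cond, hopen'⟩ := hopen
    have hlast' : Walk.myLast s.headEnd σ' = true := hlast
    cases s with
    | dirF hd =>
      exact ih _ _ (goodTo_append ρ hρ (.cons (.dirF hd) (.nil _)) ⟨cond, trivial⟩ rfl)
        hopen' hlast'
    | dirB hd =>
      exact ih _ _ (goodTo_append ρ hρ (.cons (.dirB hd) (.nil _)) ⟨cond, trivial⟩ rfl)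
        hopen' hlast'
    | bid hb =>
      have hb' : G.bi y m ∨ (y = a ∧ m = b) ∨ (y = b ∧ m = a) := hb
      rcases hb' with hG | ⟨rfl, rfl⟩ | ⟨rfl, rfl⟩
      · exact ih _ _ (goodTo_append ρ hρ (.cons (.bid hG) (.nil _)) ⟨cond, trivial⟩ rfl)
          hopen' hlast'
      · -- the new edge, traversed from a to b (now renamed y, m)
        by_cases hyc : y ∈ C
        · cases hy with
          | false =>
            exfalso
            rw [if_neg (by simp [Step.headStart])] at cond
            exact cond hyc
          | true =>
            have hργ : ρ.MuConn C := muConn_of_goodTo hρ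
            have hns : ¬ G.muSep {γ} {y} C := fun hm => hm rfl rfl ρ hργ
            have hns2 : ¬ G.muSep {γ} {m} C := fun hm => hns (h.2.2 γ C hyc hm)
            obtain ⟨ρ₂, hρ₂⟩ := exists_of_not_muSep hns2
            exact ih _ _ (goodTo_of_muConn hρ₂) hopen' hlast'
        · have hns : ¬ G.muSep {y} {m} C := fun hm => h.1.2 ⟨C, hyc, hm⟩
          obtain ⟨ν, hν⟩ := exists_of_not_muSep hns
          cases ν with
          | nil => exact hν.elim
          | cons t ν' =>
            have hjun : Walk.openFrom C (G.anSet C) hy (Walk.cons t ν') := by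
              refine ⟨?_, hν.2.1⟩
              by_cases hh : (hy && t.headStart) = true
              · rw [if_pos hh]
                have hhy : hy = true := ((Bool.and_eq_true _ _).mp hh).1
                subst hhy
                rw [if_pos (by simp [Step.headStart])] at cond
                exact cond
              · rw [if_neg hh]
                exact hyc
            have hlν : Walk.myLast hy (Walk.cons t ν') = true := by
              have h22 := hν.2.2
              rwa [Walk.lastHead_cons] at h22
            exact ih _ _ (goodTo_append ρ hρ (Walk.cons t ν') hjun hlν) hopen' hlast'
      · -- the new edge, traversed from b to a (now renamed y, m)
        by_cases hyc : y ∈ C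
        · cases hy with
          | false =>
            exfalso
            rw [if_neg (by simp [Step.headStart])] at cond
            exact cond hyc
          | true =>
            have hργ : ρ.MuConn C := muConn_of_goodTo hρ
            have hns : ¬ G.muSep {γ} {y} C := fun hm => hm rfl rfl ρ hργ
            have hns2 : ¬ G.muSep {γ} {m} C := fun hm => hns (h.2.1 γ C hyc hm)
            obtain ⟨ρ₂, hρ₂⟩ := exists_of_not_muSep hns2
            exact ih _ _ (goodTo_of_muConn hρ₂) hopen' hlast'
        · have hns : ¬ G.muSep {y} {m} C := fun hm => h.1.1 ⟨C, hyc, hm⟩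
          obtain ⟨ν, hν⟩ := exists_of_not_muSep hns
          cases ν with
          | nil => exact hν.elim
          | cons t ν' =>
            have hjun : Walk.openFrom C (G.anSet C) hy (Walk.cons t ν') := by
              refine ⟨?_, hν.2.1⟩
              by_cases hh : (hy && t.headStart) = true
              · rw [if_pos hh]
                have hhy : hy = true := ((Bool.and_eq_true _ _).mp hh).1
                subst hhy
                rw [if_pos (by simp [Step.headStart])] at cond
                exact cond
              · rw [if_neg hh]
                exact hyc
            have hlν : Walk.myLast hy (Walk.cons t ν') = true := by
              have h22 := hν.2.2
              rwa [Walk.lastHead_cons] at h22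
            exact ih _ _ (goodTo_append ρ hρ (Walk.cons t ν') hjun hlν) hopen' hlast'

end DMG

/-- Lemma 1: if `a` and `b` are potential siblings in
`I(G)`, then adding the bidirected edge `a ↔ b` yields a Markov equivalent
graph: `I(G⁺) = I(G)`. -/
theorem stmt13 {V : Type u} [Fintype V] (G : DMG V) (a b : V)
    (h : G.PotSib a b) :
    DMG.MarkovEq (G.addBi a b) G := by
  intro A B C
  constructor
  · -- μ-separation in G⁺ implies μ-separation in G, since G ⊆ G⁺
    intro hsep x y hx hyB w hw
    exact hsep hx hyB (w.map (DMG.subAddBi G a b)) (DMG.muConn_map_addBi hw)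
  · -- the hard direction
    intro hsep x y hx hyB w hw
    cases w with
    | nil => exact hw
    | cons s w₀ =>
      obtain ⟨hxC, hopen, hlw⟩ := hw
      have hlast' : DMG.Walk.myLast s.headEnd w₀ = true := by
        rwa [DMG.Walk.lastHead_cons] at hlw
      have hopen' : DMG.Walk.openFrom C (G.anSet C) s.headEnd w₀ := hopen
      cases s with
      | dirF hd =>
        obtain ⟨w', hw'⟩ := DMG.main_lemma G a b h C x w₀ _
          (.cons (.dirF hd) (.nil _)) ⟨hxC, trivial, rfl⟩ hopen' hlast'
        exact hsep hx hyB w' hw'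
      | dirB hd =>
        obtain ⟨w', hw'⟩ := DMG.main_lemma G a b h C x w₀ _
          (.cons (.dirB hd) (.nil _)) ⟨hxC, trivial, rfl⟩ hopen' hlast'
        exact hsep hx hyB w' hw'
      | bid hb =>
        rename_i m
        have hb' : G.bi x m ∨ (x = a ∧ m = b) ∨ (x = b ∧ m = a) := hb
        rcases hb' with hG | ⟨rfl, rfl⟩ | ⟨rfl, rfl⟩
        · obtain ⟨w', hw'⟩ := DMG.main_lemma G a b h C x w₀ _
            (.cons (.bid hG) (.nil _)) ⟨hxC, trivial, rfl⟩ hopen' hlast'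
          exact hsep hx hyB w' hw'
        · have hns : ¬ G.muSep {x} {m} C := fun hm => h.1.2 ⟨C, hxC, hm⟩
          obtain ⟨ν, hν⟩ := DMG.exists_of_not_muSep hns
          obtain ⟨w', hw'⟩ := DMG.main_lemma G x m h C x w₀ true ν
            (DMG.goodTo_of_muConn hν) hopen' hlast'
          exact hsep hx hyB w' hw'
        · have hns : ¬ G.muSep {x} {m} C := fun hm => h.1.1 ⟨C, hxC, hm⟩
          obtain ⟨ν, hν⟩ := DMG.exists_of_not_muSep hns
          obtain ⟨w', hw'⟩ := DMG.main_lemma G m x h C x w₀ true ν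
            (DMG.goodTo_of_muConn hν) hopen' hlast'
          exact hsep hx hyB w' hw'
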